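/- arXiv:1006.1724 — 3 statements merged into one kernel-verified Lean document; each statement's English description precedes it below -/
import Mathlib

section
/- The polynomial P(t) = t^8 - 5t^7 - 10t^6 + 75t^5 - 125t^4 + 1875t^3 - 6250t^2 - 78125t + 390625 has no complex root of the form 5ζ where ζ is a root of unity. -/
open Polynomial

private lemma totient_le_eight_dvd {d : ℕ} (hd : 0 < d) (h : d.totient ≤ 8) : d ∣ 5040 := by
  rw [← Nat.factorization_le_iff_dvd hd.ne' (by norm_num)]
  intro p
  by_cases hp : p.Prime
  · set k := d.factorization p with hk
    rw [← Nat.Prime.pow_dvd_iff_le_factorization hp (by norm_num)]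
    have h1 : Nat.totient (p ^ k) ∣ Nat.totient d :=
      Nat.totient_dvd_of_dvd (Nat.ordProj_dvd d p)
    have h2 : Nat.totient (p ^ k) ≤ 8 :=
      le_trans (Nat.le_of_dvd (Nat.totient_pos.mpr hd) h1) h
    rcases Nat.eq_zero_or_pos k with h0 | hkpos
    · simp [h0]
    rw [Nat.totient_prime_pow hp hkpos] at h2
    have hp1 : p - 1 ≤ 8 := by
      calc p - 1 ≤ p ^ (k - 1) * (p - 1) :=
            Nat.le_mul_of_pos_left _ (pow_pos hp.pos _)
        _ ≤ 8 := h2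
    have hp2 : 2 ≤ p := hp.two_le
    have hp9 : p ≤ 9 := by omega
    interval_cases p
    · -- p = 2
      have hk4 : k ≤ 4 := by
        by_contra hc
        have : 2 ^ 4 ≤ 2 ^ (k - 1) := Nat.pow_le_pow_right (by norm_num) (by omega)
        omega
      exact dvd_trans (pow_dvd_pow 2 hk4) (by norm_num)
    · -- p = 3
      have hk2 : k ≤ 2 := by
        by_contra hc
        have : 3 ^ 2 ≤ 3 ^ (k - 1) := Nat.pow_le_pow_right (by norm_num) (by omega)
        omega
      exact dvd_trans (pow_dvd_pow 3 hk2) (by norm_num)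
    · exact absurd hp (by norm_num)
    · -- p = 5
      have hk1 : k ≤ 1 := by
        by_contra hc
        have : 5 ^ 1 ≤ 5 ^ (k - 1) := Nat.pow_le_pow_right (by norm_num) (by omega)
        omega
      exact dvd_trans (pow_dvd_pow 5 hk1) (by norm_num)
    · exact absurd hp (by norm_num)
    · -- p = 7
      have hk1 : k ≤ 1 := by
        by_contra hc
        have : 7 ^ 1 ≤ 7 ^ (k - 1) := Nat.pow_le_pow_right (by norm_num) (by omega)
        omega
      exact dvd_trans (pow_dvd_pow 7 hk1) (by norm_num)
    · exact absurd hp (by norm_num)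
    · exact absurd hp (by norm_num)
  · simp [Nat.factorization_eq_zero_of_not_prime d hp]

set_option maxRecDepth 40000 in
private lemma divisors_totient_le {m : ℕ} (hm : m ∈ Nat.divisors 5040)
    (h : m.totient ≤ 8) : m ≤ 30 := by
  revert h; revert hm; revert m; decide

theorem stmt_8 :
    ∀ ζ : ℂ, (∃ n : ℕ, 0 < n ∧ ζ ^ n = 1) →
      (5 * ζ) ^ 8 - 5 * (5 * ζ) ^ 7 - 10 * (5 * ζ) ^ 6 + 75 * (5 * ζ) ^ 5 - 125 * (5 * ζ) ^ 4
        + 1875 * (5 * ζ) ^ 3 - 6250 * (5 * ζ) ^ 2 - 78125 * (5 * ζ) + 390625 ≠ 0 := by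
  rintro ζ ⟨n, hn0, hn⟩ h
  have hfin : IsOfFinOrder ζ := isOfFinOrder_iff_pow_eq_one.mpr ⟨n, hn0, hn⟩
  obtain ⟨d, hdpos, hprim⟩ : ∃ d, 0 < d ∧ IsPrimitiveRoot ζ d :=
    ⟨orderOf ζ, hfin.orderOf_pos, IsPrimitiveRoot.orderOf ζ⟩
  have hQ : 5 * ζ ^ 8 - 5 * ζ ^ 7 - 2 * ζ ^ 6 + 3 * ζ ^ 5 - ζ ^ 4 + 3 * ζ ^ 3
      - 2 * ζ ^ 2 - 5 * ζ + 5 = 0 := by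
    linear_combination h / 78125
  set Qz : ℤ[X] := 5 * X ^ 8 - 5 * X ^ 7 - 2 * X ^ 6 + 3 * X ^ 5 - X ^ 4 + 3 * X ^ 3
      - 2 * X ^ 2 - 5 * X + 5 with hQzdef
  have hdegQz : Qz.natDegree = 8 := by
    rw [hQzdef]; compute_degree!
  have hQzne : Qz ≠ 0 := fun h0 => by simp [h0] at hdegQz
  have haeval : aeval ζ Qz = 0 := by
    rw [hQzdef]
    simp only [map_add, map_sub, map_mul, map_pow, aeval_X, map_ofNat, map_one]
    linear_combination hQ
  have hint : IsIntegral ℤ ζ := hprim.isIntegral hdpos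
  have hdvd : minpoly ℤ ζ ∣ Qz := minpoly.isIntegrallyClosed_dvd hint haeval
  rw [← Polynomial.cyclotomic_eq_minpoly hprim hdpos] at hdvd
  have htot : d.totient ≤ 8 := by
    have := Polynomial.natDegree_le_of_dvd hdvd hQzne
    rwa [Polynomial.natDegree_cyclotomic, hdegQz] at this
  have hd30 : d ≤ 30 :=
    divisors_totient_le
      (Nat.mem_divisors.mpr ⟨totient_le_eight_dvd hdpos htot, by norm_num⟩) htot
  have hzd : ζ ^ d = 1 := hprim.pow_eq_one
  clear hdvd haeval hint hn hfin hprim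
  interval_cases d
  · exact one_ne_zero (by linear_combination ((4 : ℂ) + (-1 : ℂ) * ζ + (-3 : ℂ) * ζ ^ 2 + (-1 : ℂ) * ζ ^ 4 + (2 : ℂ) * ζ ^ 5 + (-5 : ℂ) * ζ ^ 7) * hzd + ((1 : ℂ)) * hQ)
  · exact one_ne_zero (by linear_combination ((16/9 : ℂ) + (-5/9 : ℂ) * ζ + (-14/9 : ℂ) * ζ ^ 2 + (2/9 : ℂ) * ζ ^ 3 + (-7/9 : ℂ) * ζ ^ 4 + (13/9 : ℂ) * ζ ^ 5 + (-5/9 : ℂ) * ζ ^ 6 + (-20/9 : ℂ) * ζ ^ 7) * hzd + ((5/9 : ℂ) + (4/9 : ℂ) * ζ) * hQ)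
  · exact one_ne_zero (by linear_combination ((13/17 : ℂ) + (-1 : ℂ) * ζ ^ 2 + (-6/17 : ℂ) * ζ ^ 3 + (2/17 : ℂ) * ζ ^ 4 + (10/17 : ℂ) * ζ ^ 5 + (-5/17 : ℂ) * ζ ^ 6 + (-25/17 : ℂ) * ζ ^ 7) * hzd + ((6/17 : ℂ) + (6/17 : ℂ) * ζ + (5/17 : ℂ) * ζ ^ 2) * hQ)
  · exact one_ne_zero (by linear_combination ((68/117 : ℂ) + (-55/117 : ℂ) * ζ + (-64/117 : ℂ) * ζ ^ 2 + (49/117 : ℂ) * ζ ^ 3 + (-77/117 : ℂ) * ζ ^ 4 + (62/117 : ℂ) * ζ ^ 5 + (-10/117 : ℂ) * ζ ^ 6 + (-10/9 : ℂ) * ζ ^ 7) * hzd + ((37/117 : ℂ) + (2/9 : ℂ) * ζ + (28/117 : ℂ) * ζ ^ 2 + (2/9 : ℂ) * ζ ^ 3) * hQ)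
  · exact one_ne_zero (by linear_combination ((4/31 : ℂ) + (-10/93 : ℂ) * ζ + (-32/93 : ℂ) * ζ ^ 2 + (-2/31 : ℂ) * ζ ^ 4 + (7/93 : ℂ) * ζ ^ 5 + (-80/93 : ℂ) * ζ ^ 7) * hzd + ((7/31 : ℂ) + (19/93 : ℂ) * ζ + (7/31 : ℂ) * ζ ^ 2 + (16/93 : ℂ) * ζ ^ 3 + (16/93 : ℂ) * ζ ^ 4) * hQ)
  · exact one_ne_zero (by linear_combination ((-2/17 : ℂ) + (-2/9 : ℂ) * ζ ^ 2 + (7/153 : ℂ) * ζ ^ 3 + (-8/153 : ℂ) * ζ ^ 4 + (28/153 : ℂ) * ζ ^ 5 + (-65/153 : ℂ) * ζ ^ 6 + (-70/153 : ℂ) * ζ ^ 7) * hzd + ((3/17 : ℂ) + (3/17 : ℂ) * ζ + (31/153 : ℂ) * ζ ^ 2 + (3/17 : ℂ) * ζ ^ 3 + (3/17 : ℂ) * ζ ^ 4 + (14/153 : ℂ) * ζ ^ 5) * hQ)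
  · exact one_ne_zero (by linear_combination ((4/41 : ℂ) + (-65/41 : ℂ) * ζ + (37/41 : ℂ) * ζ ^ 2 + (85/41 : ℂ) * ζ ^ 3 + (-85/41 : ℂ) * ζ ^ 4 + (-37/41 : ℂ) * ζ ^ 5 + (65/41 : ℂ) * ζ ^ 6 + (-45/41 : ℂ) * ζ ^ 7) * hzd + ((9/41 : ℂ) + (-4/41 : ℂ) * ζ + (7/41 : ℂ) * ζ ^ 2 + (17/41 : ℂ) * ζ ^ 3 + (7/41 : ℂ) * ζ ^ 4 + (-4/41 : ℂ) * ζ ^ 5 + (9/41 : ℂ) * ζ ^ 6) * hQ)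
  · exact one_ne_zero (by linear_combination ((-3389/819 : ℂ) + (685/819 : ℂ) * ζ + (3403/819 : ℂ) * ζ ^ 2 + (1517/819 : ℂ) * ζ ^ 3 + (257/819 : ℂ) * ζ ^ 4 + (-437/117 : ℂ) * ζ ^ 5 + (-2375/819 : ℂ) * ζ ^ 6 + (145/63 : ℂ) * ζ ^ 7) * hzd + ((-514/819 : ℂ) + (-29/63 : ℂ) * ζ + (14/117 : ℂ) * ζ ^ 2 + (43/63 : ℂ) * ζ ^ 3 + (773/819 : ℂ) * ζ ^ 4 + (43/63 : ℂ) * ζ ^ 5 + (14/117 : ℂ) * ζ ^ 6 + (-29/63 : ℂ) * ζ ^ 7) * hQ)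
  · exact one_ne_zero (by linear_combination ((339/1241 : ℂ) + (-56/73 : ℂ) * ζ ^ 2 + (-809/1241 : ℂ) * ζ ^ 3 + (468/1241 : ℂ) * ζ ^ 4 + (164/1241 : ℂ) * ζ ^ 5 + (1125/1241 : ℂ) * ζ ^ 6 + (-1260/1241 : ℂ) * ζ ^ 7) * hzd + ((316/1241 : ℂ) + (316/1241 : ℂ) * ζ + (252/1241 : ℂ) * ζ ^ 2 + (27/1241 : ℂ) * ζ ^ 3 + (95/1241 : ℂ) * ζ ^ 4 + (-139/1241 : ℂ) * ζ ^ 5 + (95/1241 : ℂ) * ζ ^ 6 + (27/1241 : ℂ) * ζ ^ 7 + (252/1241 : ℂ) * ζ ^ 8) * hQ)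
  · exact one_ne_zero (by linear_combination ((-329/3069 : ℂ) + (610/3069 : ℂ) * ζ + (-1706/3069 : ℂ) * ζ ^ 2 + (-46/99 : ℂ) * ζ ^ 3 + (986/3069 : ℂ) * ζ ^ 4 + (119/279 : ℂ) * ζ ^ 5 + (-20/99 : ℂ) * ζ ^ 6 + (-1010/3069 : ℂ) * ζ ^ 7) * hzd + ((548/3069 : ℂ) + (670/3069 : ℂ) * ζ + (548/3069 : ℂ) * ζ ^ 2 + (202/3069 : ℂ) * ζ ^ 3 + (326/3069 : ℂ) * ζ ^ 4 + (145/3069 : ℂ) * ζ ^ 5 + (-43/3069 : ℂ) * ζ ^ 6 + (145/3069 : ℂ) * ζ ^ 7 + (326/3069 : ℂ) * ζ ^ 8 + (202/3069 : ℂ) * ζ ^ 9) * hQ)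
  · exact absurd htot (by decide)
  · exact one_ne_zero (by linear_combination ((-2572/8177 : ℂ) + (-20/481 : ℂ) * ζ + (-499/4329 : ℂ) * ζ ^ 2 + (-382/73593 : ℂ) * ζ ^ 3 + (-2230/73593 : ℂ) * ζ ^ 4 + (3674/73593 : ℂ) * ζ ^ 5 + (2345/73593 : ℂ) * ζ ^ 6 + (-35/153 : ℂ) * ζ ^ 7) * hzd + ((1121/8177 : ℂ) + (81/629 : ℂ) * ζ + (11816/73593 : ℂ) * ζ ^ 2 + (81/629 : ℂ) * ζ ^ 3 + (1121/8177 : ℂ) * ζ ^ 4 + (7/153 : ℂ) * ζ ^ 5 + (322/8177 : ℂ) * ζ ^ 6 + (30/629 : ℂ) * ζ ^ 7 + (3095/73593 : ℂ) * ζ ^ 8 + (30/629 : ℂ) * ζ ^ 9 + (322/8177 : ℂ) * ζ ^ 10 + (7/153 : ℂ) * ζ ^ 11) * hQ)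
  · exact absurd htot (by decide)
  · exact one_ne_zero (by linear_combination ((-98279/336159 : ℂ) + (-263495/336159 : ℂ) * ζ + (162403/336159 : ℂ) * ζ ^ 2 + (347084/336159 : ℂ) * ζ ^ 3 + (-349831/336159 : ℂ) * ζ ^ 4 + (-140960/336159 : ℂ) * ζ ^ 5 + (269440/336159 : ℂ) * ζ ^ 6 + (-131075/336159 : ℂ) * ζ ^ 7) * hzd + ((47576/336159 : ℂ) + (-5123/336159 : ℂ) * ζ + (46388/336159 : ℂ) * ζ ^ 2 + (85210/336159 : ℂ) * ζ ^ 3 + (46388/336159 : ℂ) * ζ ^ 4 + (-5123/336159 : ℂ) * ζ ^ 5 + (47576/336159 : ℂ) * ζ ^ 6 + (26215/336159 : ℂ) * ζ ^ 7 + (-27673/336159 : ℂ) * ζ ^ 8 + (11005/336159 : ℂ) * ζ ^ 9 + (54173/336159 : ℂ) * ζ ^ 10 + (11005/336159 : ℂ) * ζ ^ 11 + (-27673/336159 : ℂ) * ζ ^ 12 + (26215/336159 : ℂ) * ζ ^ 13) * hQ)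
  · exact one_ne_zero (by linear_combination ((-2437/3162 : ℂ) + (-10/279 : ℂ) * ζ + (215/558 : ℂ) * ζ ^ 2 + (37/102 : ℂ) * ζ ^ 3 + (-313/1581 : ℂ) * ζ ^ 4 + (-904/4743 : ℂ) * ζ ^ 5 + (-20/51 : ℂ) * ζ ^ 6 + (2395/9486 : ℂ) * ζ ^ 7) * hzd + ((145/3162 : ℂ) + (367/9486 : ℂ) * ζ + (212/1581 : ℂ) * ζ ^ 2 + (923/4743 : ℂ) * ζ ^ 3 + (923/4743 : ℂ) * ζ ^ 4 + (212/1581 : ℂ) * ζ ^ 5 + (367/9486 : ℂ) * ζ ^ 6 + (145/3162 : ℂ) * ζ ^ 7 + (-479/9486 : ℂ) * ζ ^ 8 + (265/9486 : ℂ) * ζ ^ 9 + (145/3162 : ℂ) * ζ ^ 10 + (602/4743 : ℂ) * ζ ^ 11 + (145/3162 : ℂ) * ζ ^ 12 + (265/9486 : ℂ) * ζ ^ 13 + (-479/9486 : ℂ) * ζ ^ 14) * hQ)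
  · exact one_ne_zero (by linear_combination ((-2104/819 : ℂ) + (15005/25389 : ℂ) * ζ + (55379/25389 : ℂ) * ζ ^ 2 + (17956/25389 : ℂ) * ζ ^ 3 + (11413/25389 : ℂ) * ζ ^ 4 + (-52972/25389 : ℂ) * ζ ^ 5 + (-34180/25389 : ℂ) * ζ ^ 6 + (2585/1953 : ℂ) * ζ ^ 7) * hzd + ((-257/819 : ℂ) + (-382/1953 : ℂ) * ζ + (2923/25389 : ℂ) * ζ ^ 2 + (716/1953 : ℂ) * ζ ^ 3 + (14146/25389 : ℂ) * ζ ^ 4 + (716/1953 : ℂ) * ζ ^ 5 + (2923/25389 : ℂ) * ζ ^ 6 + (-382/1953 : ℂ) * ζ ^ 7 + (-257/819 : ℂ) * ζ ^ 8 + (-517/1953 : ℂ) * ζ ^ 9 + (115/25389 : ℂ) * ζ ^ 10 + (617/1953 : ℂ) * ζ ^ 11 + (9817/25389 : ℂ) * ζ ^ 12 + (617/1953 : ℂ) * ζ ^ 13 + (115/25389 : ℂ) * ζ ^ 14 + (-517/1953 : ℂ) * ζ ^ 15) * hQ)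
  · exact absurd htot (by decide)
  · exact one_ne_zero (by linear_combination ((-3329/11169 : ℂ) + (-20/153 : ℂ) * ζ + (-4603/33507 : ℂ) * ζ ^ 2 + (-3074/33507 : ℂ) * ζ ^ 3 + (-398/33507 : ℂ) * ζ ^ 4 + (-2750/33507 : ℂ) * ζ ^ 5 + (20845/33507 : ℂ) * ζ ^ 6 + (-10075/33507 : ℂ) * ζ ^ 7) * hzd + ((1568/11169 : ℂ) + (1276/11169 : ℂ) * ζ + (4789/33507 : ℂ) * ζ ^ 2 + (961/11169 : ℂ) * ζ ^ 3 + (1121/11169 : ℂ) * ζ ^ 4 + (-964/33507 : ℂ) * ζ ^ 5 + (1121/11169 : ℂ) * ζ ^ 6 + (961/11169 : ℂ) * ζ ^ 7 + (4789/33507 : ℂ) * ζ ^ 8 + (1276/11169 : ℂ) * ζ ^ 9 + (1568/11169 : ℂ) * ζ ^ 10 + (2015/33507 : ℂ) * ζ ^ 11 + (-718/11169 : ℂ) * ζ ^ 12 + (-266/11169 : ℂ) * ζ ^ 13 + (-2789/33507 : ℂ) * ζ ^ 14 + (-266/11169 : ℂ) * ζ ^ 15 + (-718/11169 : ℂ)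 * ζ ^ 16 + (2015/33507 : ℂ) * ζ ^ 17) * hQ)
  · exact absurd htot (by decide)
  · exact one_ne_zero (by linear_combination ((-4712008/5545683 : ℂ) + (2193050/5545683 : ℂ) * ζ + (757310/5545683 : ℂ) * ζ ^ 2 + (-119870/178893 : ℂ) * ζ ^ 3 + (4705618/5545683 : ℂ) * ζ ^ 4 + (-394265/504153 : ℂ) * ζ ^ 5 + (115580/178893 : ℂ) * ζ ^ 6 + (-54850/426591 : ℂ) * ζ ^ 7) * hzd + ((166735/5545683 : ℂ) + (335/3069 : ℂ) * ζ + (823501/5545683 : ℂ) * ζ ^ 2 + (17108/426591 : ℂ) * ζ ^ 3 + (1163068/5545683 : ℂ) * ζ ^ 4 + (-6802/426591 : ℂ) * ζ ^ 5 + (828142/5545683 : ℂ) * ζ ^ 6 + (-6802/426591 : ℂ) * ζ ^ 7 + (1163068/5545683 : ℂ) * ζ ^ 8 + (17108/426591 : ℂ) * ζ ^ 9 + (823501/5545683 : ℂ) * ζ ^ 10 + (335/3069 : ℂ) * ζ ^ 11 + (166735/5545683 : ℂ) * ζ ^ 12 + (10970/426591 : ℂ) * ζ ^ 13 + (-573986/5545683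 : ℂ) * ζ ^ 14 + (26957/426591 : ℂ) * ζ ^ 15 + (-905843/5545683 : ℂ) * ζ ^ 16 + (26957/426591 : ℂ) * ζ ^ 17 + (-573986/5545683 : ℂ) * ζ ^ 18 + (10970/426591 : ℂ) * ζ ^ 19) * hQ)
  · exact absurd htot (by decide)
  · exact absurd htot (by decide)
  · exact absurd htot (by decide)
  · exact one_ne_zero (by linear_combination ((-131657/57239 : ℂ) + (2816/3367 : ℂ) * ζ + (209882/151515 : ℂ) * ζ ^ 2 + (287687/2575755 : ℂ) * ζ ^ 3 + (360160/515151 : ℂ) * ζ ^ 4 + (-71756/73593 : ℂ) * ζ ^ 5 + (-911705/515151 : ℂ) * ζ ^ 6 + (1790/1071 : ℂ) * ζ ^ 7) * hzd + ((-74418/286195 : ℂ) + (-2042/22015 : ℂ) * ζ + (5908/73593 : ℂ) * ζ ^ 2 + (4877/22015 : ℂ) * ζ ^ 3 + (113653/286195 : ℂ) * ζ ^ 4 + (407/1071 : ℂ) * ζ ^ 5 + (161/8177 : ℂ) * ζ ^ 6 + (-733/22015 : ℂ) * ζ ^ 7 + (-277006/2575755 : ℂ) * ζ ^ 8 + (-733/22015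 : ℂ) * ζ ^ 9 + (161/8177 : ℂ) * ζ ^ 10 + (407/1071 : ℂ) * ζ ^ 11 + (113653/286195 : ℂ) * ζ ^ 12 + (4877/22015 : ℂ) * ζ ^ 13 + (5908/73593 : ℂ) * ζ ^ 14 + (-2042/22015 : ℂ) * ζ ^ 15 + (-74418/286195 : ℂ) * ζ ^ 16 + (-358/1071 : ℂ) * ζ ^ 17 + (161/8177 : ℂ) * ζ ^ 18 + (1783/22015 : ℂ) * ζ ^ 19 + (385331/2575755 : ℂ) * ζ ^ 20 + (1783/22015 : ℂ) * ζ ^ 21 + (161/8177 : ℂ) * ζ ^ 22 + (-358/1071 : ℂ) * ζ ^ 23) * hQ)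
  · exact absurd htot (by decide)
  · exact absurd htot (by decide)
  · exact absurd htot (by decide)
  · exact absurd htot (by decide)
  · exact absurd htot (by decide)
  · exact one_ne_zero (by linear_combination ((-3967861/2017356 : ℂ) + (62375/178002 : ℂ) * ζ + (167639/178002 : ℂ) * ζ ^ 2 + (-1777/48807 : ℂ) * ζ ^ 3 + (1058011/3026034 : ℂ) * ζ ^ 4 + (-27206/45849 : ℂ) * ζ ^ 5 + (-2260/48807 : ℂ) * ζ ^ 6 + (5039365/3026034 : ℂ) * ζ ^ 7) * hzd + ((-390101/2017356 : ℂ) + (-746153/6052068 : ℂ) * ζ + (-74329/6052068 : ℂ) * ζ ^ 2 + (142661/3026034 : ℂ) * ζ ^ 3 + (446213/3026034 : ℂ) * ζ ^ 4 + (885865/6052068 : ℂ) * ζ ^ 5 + (980299/6052068 : ℂ) * ζ ^ 6 + (482611/2017356 : ℂ) * ζ ^ 7 + (47504/168113 : ℂ) * ζ ^ 8 + (532192/1513017 : ℂ) * ζ ^ 9 + (193774/504339 : ℂ) * ζ ^ 10 + (1406773/3026034 : ℂ) * ζ ^ 11 + (193774/504339 : ℂ) * ζ ^ 12 + (532192/1513017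 : ℂ) * ζ ^ 13 + (47504/168113 : ℂ) * ζ ^ 14 + (482611/2017356 : ℂ) * ζ ^ 15 + (980299/6052068 : ℂ) * ζ ^ 16 + (885865/6052068 : ℂ) * ζ ^ 17 + (446213/3026034 : ℂ) * ζ ^ 18 + (142661/3026034 : ℂ) * ζ ^ 19 + (-74329/6052068 : ℂ) * ζ ^ 20 + (-746153/6052068 : ℂ) * ζ ^ 21 + (-390101/2017356 : ℂ) * ζ ^ 22 + (-1007873/3026034 : ℂ) * ζ ^ 23 + (-979849/3026034 : ℂ) * ζ ^ 24 + (-341293/1008678 : ℂ) * ζ ^ 25 + (-113633/336226 : ℂ) * ζ ^ 26 + (-341293/1008678 : ℂ) * ζ ^ 27 + (-979849/3026034 : ℂ) * ζ ^ 28 + (-1007873/3026034 : ℂ) * ζ ^ 29) * hQ)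
end

section
/- Let Φ(t) = (t-3)^2(t^2+3t+9)·g(t) be the characteristic polynomial of Frobenius modulo 3 as above, where g is the degree-18 factor. Then exactly 4 complex roots of Φ, counted with multiplicity, are of the form 3ζ with ζ a root of unity. -/
open Polynomial

/-- The integer polynomial `Q` with `3^17 * Q(ζ) = g(3ζ)`. -/
noncomputable def stmtQ : Polynomial ℤ :=
  3*X^18 + 5*X^17 + 7*X^16 + 10*X^15 + 11*X^14 + 11*X^13 + 11*X^12 + 10*X^11 + 9*X^10
    + 9*X^9 + 9*X^8 + 10*X^7 + 11*X^6 + 11*X^5 + 11*X^4 + 10*X^3 + 7*X^2 + 5*X + 3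

lemma stmtQ_natDegree : stmtQ.natDegree = 18 := by
  unfold stmtQ; compute_degree!

lemma stmtQ_eval_one : stmtQ.eval 1 = 163 := by
  simp [stmtQ]

lemma stmtQ_eval_three : stmtQ.eval 3 = 2331347373 := by
  simp [stmtQ]

lemma stmtQ_ne_zero : stmtQ ≠ 0 := by
  intro h
  have := stmtQ_eval_one
  rw [h] at this
  simp at this

lemma quad_factor (a b : ℂ) :
    (X - C a) * (X - C b) = X ^ 2 - C (a + b) * X + C (a * b) := by
  rw [C_add, C_mul]; ring

lemma zmod_pow_eq_one_of_dvd (N d : ℕ) (h : N ∣ 3 ^ d - 1) : (3 : ZMod N) ^ d = 1 := by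
  have hd1 : 1 ≤ 3 ^ d := Nat.one_le_pow _ _ (by norm_num)
  have h0 : ((3 ^ d - 1 : ℕ) : ZMod N) = 0 := (ZMod.natCast_eq_zero_iff _ _).mpr h
  calc (3 : ZMod N) ^ d = ((3 ^ d : ℕ) : ZMod N) := by push_cast; ring
    _ = (((3 ^ d - 1) + 1 : ℕ) : ZMod N) := by rw [Nat.sub_add_cancel hd1]
    _ = 1 := by rw [Nat.cast_add, h0]; simp

lemma order_three_mod_97 : orderOf (3 : ZMod 97) = 48 := by
  apply orderOf_eq_of_pow_and_pow_div_prime (by norm_num) (by decide)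
  intro q hq hqd
  have hq23 : q = 2 ∨ q = 3 := by
    rw [show (48 : ℕ) = 2 ^ 4 * 3 by norm_num] at hqd
    rcases (Nat.Prime.dvd_mul hq).mp hqd with h | h
    · exact Or.inl ((Nat.prime_dvd_prime_iff_eq hq (by norm_num)).mp (hq.dvd_of_dvd_pow h))
    · exact Or.inr ((Nat.prime_dvd_prime_iff_eq hq (by norm_num)).mp h)
  rcases hq23 with rfl | rfl <;> decide

/-- The key arithmetic fact ruling out cyclotomic divisors. -/
lemma stmt_arith (d : ℕ) (hd2 : 2 ≤ d) (htot : d.totient ≤ 18) (c : ℤ)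
    (hc1 : c ∣ 2331347373) (hc2 : c ∣ 3 ^ d - 1)
    (hlow : (2 : ℤ) ^ d.totient < c) : False := by
  have htp : 0 < d.totient := Nat.totient_pos.mpr (by omega)
  have h2c : (2 : ℤ) < c := by
    calc (2 : ℤ) = 2 ^ 1 := by norm_num
    _ ≤ 2 ^ d.totient := pow_le_pow_right₀ (by norm_num) (by omega)
    _ < c := hlow
  set C := c.toNat with hCdef
  have hcC : (C : ℤ) = c := Int.toNat_of_nonneg (by omega)
  have hC3 : 3 ≤ C := by omega
  have hCd1 : C ∣ 2331347373 := by
    have : (C : ℤ) ∣ ((2331347373 : ℕ) : ℤ) := by rw [hcC]; exact_mod_cast hc1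
    exact_mod_cast this
  have hpow1 : 1 ≤ 3 ^ d := Nat.one_le_pow _ _ (by norm_num)
  have hCd2 : C ∣ 3 ^ d - 1 := by
    have h' : ((3 ^ d - 1 : ℕ) : ℤ) = 3 ^ d - 1 := by
      rw [Nat.cast_sub hpow1]; push_cast; ring
    have : (C : ℤ) ∣ ((3 ^ d - 1 : ℕ) : ℤ) := by rw [hcC, h']; exact hc2
    exact_mod_cast this
  set p := C.minFac with hpdef
  have hp : p.Prime := Nat.minFac_prime (by omega)
  have hpC : p ∣ C := Nat.minFac_dvd C
  have hp1 : p ∣ 2331347373 := hpC.trans hCd1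
  have hp2 : p ∣ 3 ^ d - 1 := hpC.trans hCd2
  have hp4 : p = 3 ∨ p = 97 ∨ p = 179 ∨ p = 4973 := by
    rw [show (2331347373 : ℕ) = 3 ^ 3 * (97 * (179 * 4973)) by norm_num] at hp1
    rcases (Nat.Prime.dvd_mul hp).mp hp1 with h | h
    · exact Or.inl ((Nat.prime_dvd_prime_iff_eq hp (by norm_num)).mp (hp.dvd_of_dvd_pow h))
    rcases (Nat.Prime.dvd_mul hp).mp h with h | h
    · exact Or.inr (Or.inl ((Nat.prime_dvd_prime_iff_eq hp (by norm_num)).mp h))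
    rcases (Nat.Prime.dvd_mul hp).mp h with h | h
    · exact Or.inr (Or.inr (Or.inl ((Nat.prime_dvd_prime_iff_eq hp (by norm_num)).mp h)))
    · exact Or.inr (Or.inr (Or.inr ((Nat.prime_dvd_prime_iff_eq hp (by norm_num)).mp h)))
  rcases hp4 with hp3 | hp97 | hp179 | hp4973
  · -- p = 3 : impossible since p ∣ 3^d - 1
    have h3d : (3 : ℕ) ∣ 3 ^ d := dvd_pow_self 3 (by omega)
    have h31 : (3 : ℕ) ∣ 3 ^ d - (3 ^ d - 1) := Nat.dvd_sub h3d (hp3 ▸ hp2)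
    have : 3 ^ d - (3 ^ d - 1) = 1 := by omega
    rw [this] at h31
    norm_num at h31
  · -- p = 97 : then 48 ∣ d
    have hz : (3 : ZMod 97) ^ d = 1 := zmod_pow_eq_one_of_dvd 97 d (hp97 ▸ hp2)
    have h48d : 48 ∣ d := by
      rw [← order_three_mod_97]; exact orderOf_dvd_of_pow_eq_one hz
    have htotd : Nat.totient 48 ∣ Nat.totient d := Nat.totient_dvd_of_dvd h48d
    rw [show Nat.totient 48 = 16 from by decide] at htotd
    have htd16 : d.totient = 16 := by
      rcases htotd with ⟨k, hk⟩
      omega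
    obtain ⟨m, hm⟩ := h48d
    have hm1 : 1 ≤ m := by omega
    have hsm := Nat.totient_super_multiplicative 48 m
    rw [show Nat.totient 48 = 16 from by decide, ← hm, htd16] at hsm
    have hmle : m.totient ≤ 1 := by omega
    have hm2 : m ∣ 2 := Nat.dvd_two_of_totient_le_one (by omega) hmle
    have : m = 1 ∨ m = 2 := by
      have := Nat.le_of_dvd (by norm_num) hm2
      interval_cases m <;> simp_all
    rcases this with rfl | rfl
    · -- d = 48
      have hd48 : d = 48 := by omega
      subst hd48
      have hCg : C ∣ Nat.gcd 2331347373 (3 ^ 48 - 1) := Nat.dvd_gcd hCd1 hCd2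
      rw [show Nat.gcd 2331347373 (3 ^ 48 - 1) = 97 from by norm_num] at hCg
      have hCle : C ≤ 97 := Nat.le_of_dvd (by norm_num) hCg
      rw [htd16] at hlow
      have : ((65536 : ℕ) : ℤ) < (C : ℤ) := by
        calc ((65536 : ℕ) : ℤ) = 2 ^ 16 := by norm_num
        _ < c := hlow
        _ = C := hcC.symm
      have : (65536 : ℕ) < C := by exact_mod_cast this
      omega
    · -- d = 96 : totient is 32 ≠ 16
      have hd96 : d = 96 := by omega
      have : Nat.totient 96 = 32 := by decide
      rw [hd96, this] at htd16
      omega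
  · -- p = 179 : then 89 ∣ d, totient too big
    have hz : (3 : ZMod 179) ^ d = 1 := zmod_pow_eq_one_of_dvd 179 d (hp179 ▸ hp2)
    have h3ne : (3 : ZMod 179) ≠ 0 := by decide
    have h21' : (3 : ZMod 179) ^ 2 ≠ 1 := by decide
    haveI : Fact (Nat.Prime 179) := ⟨by norm_num⟩
    set o := orderOf (3 : ZMod 179) with hodef
    have hod : o ∣ d := orderOf_dvd_of_pow_eq_one hz
    have hferm : (3 : ZMod 179) ^ (179 - 1) = 1 := ZMod.pow_card_sub_one_eq_one h3ne
    have ho178 : o ∣ 178 := orderOf_dvd_of_pow_eq_one hferm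
    have h89 : 89 ∣ o := by
      by_contra h
      have hcop : Nat.Coprime o 89 :=
        ((Nat.Prime.coprime_iff_not_dvd (by norm_num : Nat.Prime 89)).mpr h).symm
      have ho2 : o ∣ 2 := by
        have h' : o ∣ 2 * 89 := by rw [show 2 * 89 = 178 by norm_num]; exact ho178
        exact Nat.Coprime.dvd_of_dvd_mul_right hcop h'
      exact h21' (orderOf_dvd_iff_pow_eq_one.mp ho2)
    have h89d : 89 ∣ d := h89.trans hod
    have htot89 : (88 : ℕ) ∣ d.totient := by
      have := Nat.totient_dvd_of_dvd h89d
      rwa [show Nat.totient 89 = 88 from by decide] at this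
    have : 88 ≤ d.totient := Nat.le_of_dvd (by omega) htot89
    omega
  · -- p = 4973 : then 113 ∣ d, totient too big
    have hz : (3 : ZMod 4973) ^ d = 1 := zmod_pow_eq_one_of_dvd 4973 d (hp4973 ▸ hp2)
    have h3ne : (3 : ZMod 4973) ≠ 0 := by decide
    have h441' : (3 : ZMod 4973) ^ 44 ≠ 1 := by decide
    haveI : Fact (Nat.Prime 4973) := ⟨by norm_num⟩
    set o := orderOf (3 : ZMod 4973) with hodef
    have hod : o ∣ d := orderOf_dvd_of_pow_eq_one hz
    have hferm : (3 : ZMod 4973) ^ (4973 - 1) = 1 := ZMod.pow_card_sub_one_eq_one h3ne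
    have ho4972 : o ∣ 4972 := orderOf_dvd_of_pow_eq_one hferm
    have h113 : 113 ∣ o := by
      by_contra h
      have hcop : Nat.Coprime o 113 :=
        ((Nat.Prime.coprime_iff_not_dvd (by norm_num : Nat.Prime 113)).mpr h).symm
      have ho44 : o ∣ 44 := by
        have h' : o ∣ 44 * 113 := by rw [show 44 * 113 = 4972 by norm_num]; exact ho4972
        exact Nat.Coprime.dvd_of_dvd_mul_right hcop h'
      exact h441' (orderOf_dvd_iff_pow_eq_one.mp ho44)
    have h113d : 113 ∣ d := h113.trans hod
    have htot113 : (112 : ℕ) ∣ d.totient := by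
      have := Nat.totient_dvd_of_dvd h113d
      rwa [show Nat.totient 113 = 112 from by decide] at this
    have : 112 ≤ d.totient := Nat.le_of_dvd (by omega) htot113
    omega

/-- No root of unity is a root of `stmtQ`. -/
lemma stmtQ_no_root_of_unity (ζ : ℂ) (h : ∃ n : ℕ, 0 < n ∧ ζ ^ n = 1)
    (hroot : Polynomial.aeval ζ stmtQ = 0) : False := by
  obtain ⟨n, hn, hζn⟩ := h
  have hfin : IsOfFinOrder ζ := isOfFinOrder_iff_pow_eq_one.mpr ⟨n, hn, hζn⟩
  set d := orderOf ζ with hddef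
  have hd0 : 0 < d := hfin.orderOf_pos
  by_cases hd1 : d = 1
  · have hζ1 : ζ = 1 := orderOf_eq_one_iff.mp hd1
    rw [hζ1] at hroot
    have : Polynomial.aeval (1 : ℂ) stmtQ = ((stmtQ.eval 1 : ℤ) : ℂ) := by
      rw [aeval_def, eval₂_at_one]; simp
    rw [this, stmtQ_eval_one] at hroot
    norm_num at hroot
  · have hd2 : 2 ≤ d := by omega
    have hprim : IsPrimitiveRoot ζ d := IsPrimitiveRoot.orderOf ζ
    have hmp : minpoly ℚ ζ ∣ stmtQ.map (algebraMap ℤ ℚ) :=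
      minpoly.dvd ℚ ζ (by rwa [aeval_map_algebraMap])
    have hcyc : cyclotomic d ℤ ∣ stmtQ := by
      have h1 : cyclotomic d ℚ = minpoly ℚ ζ := cyclotomic_eq_minpoly_rat hprim hd0
      have h2 : (cyclotomic d ℤ).map (algebraMap ℤ ℚ) ∣ stmtQ.map (algebraMap ℤ ℚ) := by
        rw [show (cyclotomic d ℤ).map (algebraMap ℤ ℚ) = cyclotomic d ℚ from
            map_cyclotomic_int d ℚ, h1]
        exact hmp
      exact (map_dvd_map _ (algebraMap ℤ ℚ).injective_int (cyclotomic.monic d ℤ)).mp h2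
    have htot : d.totient ≤ 18 := by
      have := Polynomial.natDegree_le_of_dvd hcyc stmtQ_ne_zero
      rwa [natDegree_cyclotomic, stmtQ_natDegree] at this
    set c := (cyclotomic d ℤ).eval 3 with hcdef
    have hc1 : c ∣ 2331347373 := by
      have := Polynomial.eval_dvd (x := (3 : ℤ)) hcyc
      rwa [stmtQ_eval_three] at this
    have hc2 : c ∣ 3 ^ d - 1 := by
      have := Polynomial.eval_dvd (x := (3 : ℤ)) (cyclotomic.dvd_X_pow_sub_one d ℤ)
      simpa using this
    have hlow : (2 : ℤ) ^ d.totient < c := by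
      have hR : ((3 : ℝ) - 1) ^ d.totient < (cyclotomic d ℝ).eval 3 :=
        sub_one_pow_totient_lt_cyclotomic_eval hd2 (by norm_num)
      have heq : (cyclotomic d ℝ).eval 3 = (c : ℝ) := by
        have := cyclotomic.eval_apply (3 : ℤ) d (Int.castRingHom ℝ)
        simpa using this
      rw [heq] at hR
      have : ((2 : ℤ) ^ d.totient : ℝ) < (c : ℝ) := by
        push_cast
        convert hR using 2
        norm_num
      exact_mod_cast this
    exact stmt_arith d hd2 htot c hc1 hc2 hlow

open scoped Classical in
theorem stmt_18
    (g : Polynomial ℂ)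
    (hg : g = X ^ 18 + 5 * X ^ 17 + 21 * X ^ 16 + 90 * X ^ 15 + 297 * X ^ 14 + 891 * X ^ 13
      + 2673 * X ^ 12 + 7290 * X ^ 11 + 19683 * X ^ 10 + 59049 * X ^ 9 + 177147 * X ^ 8
      + 590490 * X ^ 7 + 1948617 * X ^ 6 + 5845851 * X ^ 5 + 17537553 * X ^ 4
      + 47829690 * X ^ 3 + 100442349 * X ^ 2 + 215233605 * X + 387420489)
    (Φ : Polynomial ℂ)
    (hΦ : Φ = (X - 3) ^ 2 * (X ^ 2 + 3 * X + 9) * g) :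
    (Φ.roots.filter fun z : ℂ =>
        ∃ ζ : ℂ, (∃ n : ℕ, 0 < n ∧ ζ ^ n = 1) ∧ z = 3 * ζ).card = 4 := by
  set P : ℂ → Prop := fun z : ℂ => ∃ ζ : ℂ, (∃ n : ℕ, 0 < n ∧ ζ ^ n = 1) ∧ z = 3 * ζ with hP
  -- the primitive cube root of unity
  set s : ℝ := Real.sqrt 3 with hsdef
  have hs : ((s : ℂ)) ^ 2 = 3 := by
    have : s ^ 2 = 3 := Real.sq_sqrt (by norm_num)
    exact_mod_cast this
  set ω : ℂ := (-1 + (s : ℂ) * Complex.I) / 2 with hωdef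
  have hI : Complex.I ^ 2 = -1 := Complex.I_sq
  have hω : ω ^ 2 + ω + 1 = 0 := by
    rw [hωdef]
    linear_combination (Complex.I ^ 2 / 4) * hs + (3 / 4) * hI
  have hω3 : ω ^ 3 = 1 := by linear_combination (ω - 1) * hω
  have hω23 : (ω ^ 2) ^ 3 = 1 := by
    rw [show (ω ^ 2) ^ 3 = (ω ^ 3) ^ 2 by ring, hω3]; norm_num
  -- factor the quadratic
  have hquad : (X ^ 2 + 3 * X + 9 : ℂ[X]) = (X - C (3 * ω)) * (X - C (3 * ω ^ 2)) := by
    have h1 : (3 : ℂ) * ω + 3 * ω ^ 2 = -3 := by linear_combination 3 * hω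
    have h2 : (3 * ω) * (3 * ω ^ 2) = 9 := by linear_combination 9 * hω3
    rw [quad_factor, h1, h2, map_neg]
    simp only [map_ofNat]
    ring
  have hg0 : g ≠ 0 := by
    intro h
    have he : g.eval 0 = 387420489 := by simp [hg]
    rw [h] at he
    simp at he
  have hX3 : ((X : ℂ[X]) - 3) = X - C 3 := by rw [map_ofNat]
  have hne1 : ((X : ℂ[X]) - 3) ^ 2 ≠ 0 := by
    rw [hX3]; exact pow_ne_zero _ (X_sub_C_ne_zero 3)
  have hne2 : (X ^ 2 + 3 * X + 9 : ℂ[X]) ≠ 0 := by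
    rw [hquad]; exact mul_ne_zero (X_sub_C_ne_zero _) (X_sub_C_ne_zero _)
  have hroots : Φ.roots = (2 • {(3 : ℂ)} + {3 * ω, 3 * ω ^ 2}) + g.roots := by
    rw [hΦ, roots_mul (mul_ne_zero (mul_ne_zero hne1 hne2) hg0),
      roots_mul (mul_ne_zero hne1 hne2)]
    congr 1
    congr 1
    · rw [hX3, roots_pow, roots_X_sub_C]
    · rw [hquad, roots_mul (mul_ne_zero (X_sub_C_ne_zero _) (X_sub_C_ne_zero _)),
        roots_X_sub_C, roots_X_sub_C]
      rfl
  have hA : Multiset.filter P (2 • {(3 : ℂ)} + {3 * ω, 3 * ω ^ 2})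
      = 2 • {(3 : ℂ)} + {3 * ω, 3 * ω ^ 2} := by
    rw [Multiset.filter_eq_self]
    intro a ha
    simp only [Multiset.mem_add, Multiset.mem_singleton,
      Multiset.mem_cons] at ha
    have ha' : a = 3 ∨ a = 3 * ω ∨ a = 3 * ω ^ 2 := by
      rcases ha with h | h
      · left
        have := Multiset.mem_of_mem_nsmul h
        simpa using this
      · right; simpa using h
    rcases ha' with rfl | rfl | rfl
    · exact ⟨1, ⟨1, one_pos, one_pow 1⟩, by norm_num⟩
    · exact ⟨ω, ⟨3, by norm_num, hω3⟩, rfl⟩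
    · exact ⟨ω ^ 2, ⟨3, by norm_num, hω23⟩, rfl⟩
  have hB : Multiset.filter P g.roots = 0 := by
    rw [Multiset.filter_eq_nil]
    rintro z hz ⟨ζ, hζ, rfl⟩
    have hgz : g.eval (3 * ζ) = 0 := by
      exact (mem_roots hg0).mp hz
    have hiden : (Polynomial.aeval ζ stmtQ) * 3 ^ 17 = g.eval (3 * ζ) := by
      rw [hg]
      simp only [stmtQ, map_add, map_mul, map_pow, aeval_X, map_ofNat,
        eval_add, eval_mul, eval_pow, eval_X, eval_ofNat]
      push_cast
      ring
    rw [hgz] at hiden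
    have hQζ : Polynomial.aeval ζ stmtQ = 0 := by
      rcases mul_eq_zero.mp hiden with h | h
      · exact h
      · exfalso; revert h; norm_num
    exact stmtQ_no_root_of_unity ζ hζ hQζ
  rw [hroots, Multiset.filter_add, hA, hB, Multiset.card_add]
  simp
end

section
/- Let f_3 = x^3 + 2x^2y + x^2z + 2xy^2 + xyz + xz^2 + y^3 + y^2z + 2yz^2 + 2z^3 and let f_6 be the sextic form over F_3 given by 2x^6 + x^4y^2 + 2x^3y^2z + x^2y^2z^2 + x^2yz^3 + 2x^2z^4 + xy^4z + xy^3z^2 + xy^2z^3 + 2xz^5 + 2y^6 + y^4z^2 + y^3z^3. Then there exists a homogeneous quadratic form q in F_27[x,y,z] such that f_6 - f_3^2 = q · q^σ · q^{σ^2}, where σ is the Frobenius x ↦ x^3 of F_27 over F_3 applied to the coefficients. -/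
open MvPolynomial

noncomputable def f3 : MvPolynomial (Fin 3) (GaloisField 3 3) :=
  X 0 ^ 3 + 2 * X 0 ^ 2 * X 1 + X 0 ^ 2 * X 2 + 2 * X 0 * X 1 ^ 2 + X 0 * X 1 * X 2
    + X 0 * X 2 ^ 2 + X 1 ^ 3 + X 1 ^ 2 * X 2 + 2 * X 1 * X 2 ^ 2 + 2 * X 2 ^ 3

noncomputable def f6 : MvPolynomial (Fin 3) (GaloisField 3 3) :=
  2 * X 0 ^ 6 + X 0 ^ 4 * X 1 ^ 2 + 2 * X 0 ^ 3 * X 1 ^ 2 * X 2 + X 0 ^ 2 * X 1 ^ 2 * X 2 ^ 2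
    + X 0 ^ 2 * X 1 * X 2 ^ 3 + 2 * X 0 ^ 2 * X 2 ^ 4 + X 0 * X 1 ^ 4 * X 2
    + X 0 * X 1 ^ 3 * X 2 ^ 2 + X 0 * X 1 ^ 2 * X 2 ^ 3 + 2 * X 0 * X 2 ^ 5
    + 2 * X 1 ^ 6 + X 1 ^ 4 * X 2 ^ 2 + X 1 ^ 3 * X 2 ^ 3

lemma exists_root : ∃ a : GaloisField 3 3, a ^ 3 = a + 1 := by
  have h3 : (3 : Polynomial (ZMod 3)) = 0 := by
    have : ((3 : ℕ) : Polynomial (ZMod 3)) = 0 := by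
      rw [CharP.cast_eq_zero_iff _ 3]
    simpa using this
  have hfac : (Polynomial.X ^ 3 ^ 3 - Polynomial.X : Polynomial (ZMod 3)) =
      (Polynomial.X ^ 3 - Polynomial.X - 1) * (Polynomial.X ^ 1 + 2 * Polynomial.X ^ 2 + Polynomial.X ^ 3 + 2 * Polynomial.X ^ 5 + 2 * Polynomial.X ^ 6 + Polynomial.X ^ 7 + Polynomial.X ^ 8 + Polynomial.X ^ 9 + Polynomial.X ^ 11 + Polynomial.X ^ 14 + 2 * Polynomial.X ^ 15 + Polynomial.X ^ 16 + 2 * Polynomial.X ^ 18 + 2 * Polynomial.X ^ 19 + Polynomial.X ^ 20 + Polynomial.X ^ 21 + Polynomial.X ^ 22 + Polynomial.X ^ 24) := by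
    linear_combination (Polynomial.X ^ 2 + Polynomial.X ^ 3 + Polynomial.X ^ 6 + Polynomial.X ^ 7 + Polynomial.X ^ 15 + Polynomial.X ^ 16 + Polynomial.X ^ 19 + Polynomial.X ^ 20) * h3
  have hs : Polynomial.Splits ((Polynomial.X ^ 3 ^ 3 - Polynomial.X : Polynomial (ZMod 3)).map
      (algebraMap (ZMod 3) (GaloisField 3 3))) :=
    by
      have := FiniteField.splits_X_pow_nat_card_sub_X 3 (K := GaloisField 3 3)
      rw [GaloisField.card 3 3 (by norm_num)] at this
      exact this
  have hne : (Polynomial.X ^ 3 ^ 3 - Polynomial.X : Polynomial (ZMod 3)) ≠ 0 := by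
    intro hzero
    have h27 := congrArg (fun p => Polynomial.coeff p 27) hzero
    simp [Polynomial.coeff_X_pow, Polynomial.coeff_X] at h27
  rw [hfac] at hs hne
  have hs2 := Polynomial.Splits.of_dvd hs (Polynomial.map_ne_zero hne)
    (Polynomial.map_dvd _ (dvd_mul_right _ _))
  have hdeg : (Polynomial.X ^ 3 - Polynomial.X - 1 : Polynomial (ZMod 3)).degree = 3 := by
    compute_degree!
  obtain ⟨r, hr⟩ := hs2.exists_eval_eq_zero (by rw [Polynomial.degree_map, hdeg]; decide)
  refine ⟨r, ?_⟩
  rw [Polynomial.eval_map] at hr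
  simp only [Polynomial.eval₂_sub, Polynomial.eval₂_pow, Polynomial.eval₂_X,
    Polynomial.eval₂_one] at hr
  linear_combination hr

set_option maxHeartbeats 1000000 in
lemma main_id {R : Type} [CommRing R] (A x y z : R) (h3 : (3 : R) = 0)
    (hA : A ^ 3 = A + 1) :
    (2 * x ^ 6 + x ^ 4 * y ^ 2 + 2 * x ^ 3 * y ^ 2 * z + x ^ 2 * y ^ 2 * z ^ 2 + x ^ 2 * y * z ^ 3 + 2 * x ^ 2 * z ^ 4 + x * y ^ 4 * z + x * y ^ 3 * z ^ 2 + x * y ^ 2 * z ^ 3 + 2 * x * z ^ 5 + 2 * y ^ 6 + y ^ 4 * z ^ 2 + y ^ 3 * z ^ 3) - (x ^ 3 + 2 * x ^ 2 * y + x ^ 2 * z + 2 * x * y ^ 2 + x * y * z + x * z ^ 2 + y ^ 3 + y ^ 2 * z + 2 * y * z ^ 2 + 2 * z ^ 3) ^ 2 =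
      ((1) * (x * x) + (A + A ^ 2) * (x * y) + (1 + 2 * A ^ 2) * (x * z) + (1 + A + A ^ 2) * (y * y) + (2 * A ^ 2) * (y * z) + (2) * (z * z)) * ((1) * (x * x) + (2 + A ^ 2) * (x * y) + (A + 2 * A ^ 2) * (x * z) + (A ^ 2) * (y * y) + (2 + A + 2 * A ^ 2) * (y * z) + (2) * (z * z)) * ((1) * (x * x) + (2 * A + A ^ 2) * (x * y) + (2 * A + 2 * A ^ 2) * (x * z) + (1 + 2 * A + A ^ 2) * (y * y) + (2 + 2 * A + 2 * A ^ 2) * (y * z) + (2) * (z * z)) := by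
  linear_combination ((-24) * y ^ 2 * z ^ 4 + (-68) * y ^ 3 * z ^ 3 + (-80) * y ^ 4 * z ^ 2 + (-41) * y ^ 5 * z + (-7) * y ^ 6 + (-48) * x * y * z ^ 4 + (-162) * x * y ^ 2 * z ^ 3 + (-213) * x * y ^ 3 * z ^ 2 + (-123) * x * y ^ 4 * z + (-24) * x * y ^ 5 + (-24) * x ^ 2 * z ^ 4 + (-120) * x ^ 2 * y * z ^ 3 + (-198) * x ^ 2 * y ^ 2 * z ^ 2 + (-141) * x ^ 2 * y ^ 3 * z + (-33) * x ^ 2 * y ^ 4 + (-26) * x ^ 3 * z ^ 3 + (-77) * x ^ 3 * y * z ^ 2 + (-77) * x ^ 3 * y ^ 2 * z + (-22) * x ^ 3 * y ^ 3 + (-12) * x ^ 4 * z ^ 2 + (-18) * x ^ 4 * y * z + (-6) * x ^ 4 * y ^ 2 + (-24) * A * y ^ 2 * z ^ 4 + (-52) * A * y ^ 3 * z ^ 3 + (-54) * A * y ^ 4 * z ^ 2 + (-27) * A * y ^ 5 * z + (-5) * A * y ^ 6 + (-48) * A * x * y * z ^ 4 + (-120) * A * x * y ^ 2 * z ^ 3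 + (-144) * A * x * y ^ 3 * z ^ 2 + (-78) * A * x * y ^ 4 * z + (-15) * A * x * y ^ 5 + (-24) * A * x ^ 2 * z ^ 4 + (-84) * A * x ^ 2 * y * z ^ 3 + (-138) * A * x ^ 2 * y ^ 2 * z ^ 2 + (-87) * A * x ^ 2 * y ^ 3 * z + (-18) * A * x ^ 2 * y ^ 4 + (-16) * A * x ^ 3 * z ^ 3 + (-60) * A * x ^ 3 * y * z ^ 2 + (-48) * A * x ^ 3 * y ^ 2 * z + (-11) * A * x ^ 3 * y ^ 3 + (-12) * A * x ^ 4 * z ^ 2 + (-12) * A * x ^ 4 * y * z + (-3) * A * x ^ 4 * y ^ 2 + (-12) * A ^ 2 * y ^ 3 * z ^ 3 + (-24) * A ^ 2 * y ^ 4 * z ^ 2 + (-15) * A ^ 2 * y ^ 5 * z + (-3) * A ^ 2 * y ^ 6 + (-36) * A ^ 2 * x * y ^ 2 * z ^ 3 + (-72) * A ^ 2 * x * y ^ 3 * z ^ 2 + (-45) * A ^ 2 * x * y ^ 4 * z + (-9) * A ^ 2 * x * y ^ 5 + (-36) * A ^ 2 * x ^ 2 * y * z ^ 3 + (-72) * A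 ^ 2 * x ^ 2 * y ^ 2 * z ^ 2 + (-45) * A ^ 2 * x ^ 2 * y ^ 3 * z + (-9) * A ^ 2 * x ^ 2 * y ^ 4 + (-12) * A ^ 2 * x ^ 3 * z ^ 3 + (-24) * A ^ 2 * x ^ 3 * y * z ^ 2 + (-15) * A ^ 2 * x ^ 3 * y ^ 2 * z + (-3) * A ^ 2 * x ^ 3 * y ^ 3 + (-8) * A ^ 3 * y ^ 3 * z ^ 3 + (-12) * A ^ 3 * y ^ 4 * z ^ 2 + (-6) * A ^ 3 * y ^ 5 * z + (-1) * A ^ 3 * y ^ 6 + (-24) * A ^ 3 * x * y ^ 2 * z ^ 3 + (-36) * A ^ 3 * x * y ^ 3 * z ^ 2 + (-18) * A ^ 3 * x * y ^ 4 * z + (-3) * A ^ 3 * x * y ^ 5 + (-24) * A ^ 3 * x ^ 2 * y * z ^ 3 + (-36) * A ^ 3 * x ^ 2 * y ^ 2 * z ^ 2 + (-18) * A ^ 3 * x ^ 2 * y ^ 3 * z + (-3) * A ^ 3 * x ^ 2 * y ^ 4 + (-8) * A ^ 3 * x ^ 3 * z ^ 3 + (-12) * A ^ 3 * x ^ 3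 * y * z ^ 2 + (-6) * A ^ 3 * x ^ 3 * y ^ 2 * z + (-1) * A ^ 3 * x ^ 3 * y ^ 3) * hA + ((-4) * z ^ 6 + (-8) * y * z ^ 5 + (-16) * y ^ 2 * z ^ 4 + (-29) * y ^ 3 * z ^ 3 + (-30) * y ^ 4 * z ^ 2 + (-15) * y ^ 5 * z + (-2) * y ^ 6 + (-2) * x * z ^ 5 + (-24) * x * y * z ^ 4 + (-63) * x * y ^ 2 * z ^ 3 + (-78) * x * y ^ 3 * z ^ 2 + (-44) * x * y ^ 4 * z + (-10) * x * y ^ 5 + (-13) * x ^ 2 * z ^ 4 + (-51) * x ^ 2 * y * z ^ 3 + (-76) * x ^ 2 * y ^ 2 * z ^ 2 + (-53) * x ^ 2 * y ^ 3 * z + (-14) * x ^ 2 * y ^ 4 + (-12) * x ^ 3 * z ^ 3 + (-33) * x ^ 3 * y * z ^ 2 + (-30) * x ^ 3 * y ^ 2 * z + (-12) * x ^ 3 * y ^ 3 + (-7) * x ^ 4 * z ^ 2 + (-10) * x ^ 4 * y * z + (-5) * x ^ 4 * y ^ 2 + (-1) * x ^ 5 * z + (-2) * x ^ 5 * y + (-4)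 * A * y * z ^ 5 + (-24) * A * y ^ 2 * z ^ 4 + (-48) * A * y ^ 3 * z ^ 3 + (-50) * A * y ^ 4 * z ^ 2 + (-25) * A * y ^ 5 * z + (-4) * A * y ^ 6 + (-4) * A * x * z ^ 5 + (-42) * A * x * y * z ^ 4 + (-108) * A * x * y ^ 2 * z ^ 3 + (-130) * A * x * y ^ 3 * z ^ 2 + (-72) * A * x * y ^ 4 * z + (-15) * A * x * y ^ 5 + (-18) * A * x ^ 2 * z ^ 4 + (-78) * A * x ^ 2 * y * z ^ 3 + (-125) * A * x ^ 2 * y ^ 2 * z ^ 2 + (-84) * A * x ^ 2 * y ^ 3 * z + (-20) * A * x ^ 2 * y ^ 4 + (-18) * A * x ^ 3 * z ^ 3 + (-54) * A * x ^ 3 * y * z ^ 2 + (-49) * A * x ^ 3 * y ^ 2 * z + (-14) * A * x ^ 3 * y ^ 3 + (-9) * A * x ^ 4 * z ^ 2 + (-13) * A * x ^ 4 * y * z + (-6) * A * x ^ 4 * y ^ 2 + (-1) * A * x ^ 5 * z + (-1) * A * x ^ 5 * y + (-8) * A ^ 2 * y * z ^ 5 + (-24) * A ^ 2 * y ^ 2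 * z ^ 4 + (-38) * A ^ 2 * y ^ 3 * z ^ 3 + (-38) * A ^ 2 * y ^ 4 * z ^ 2 + (-19) * A ^ 2 * y ^ 5 * z + (-3) * A ^ 2 * y ^ 6 + (-8) * A ^ 2 * x * z ^ 5 + (-36) * A ^ 2 * x * y * z ^ 4 + (-82) * A ^ 2 * x * y ^ 2 * z ^ 3 + (-96) * A ^ 2 * x * y ^ 3 * z ^ 2 + (-54) * A ^ 2 * x * y ^ 4 * z + (-11) * A ^ 2 * x * y ^ 5 + (-12) * A ^ 2 * x ^ 2 * z ^ 4 + (-62) * A ^ 2 * x ^ 2 * y * z ^ 3 + (-94) * A ^ 2 * x ^ 2 * y ^ 2 * z ^ 2 + (-61) * A ^ 2 * x ^ 2 * y ^ 3 * z + (-15) * A ^ 2 * x ^ 2 * y ^ 4 + (-18) * A ^ 2 * x ^ 3 * z ^ 3 + (-42) * A ^ 2 * x ^ 3 * y * z ^ 2 + (-35) * A ^ 2 * x ^ 3 * y ^ 2 * z + (-10) * A ^ 2 * x ^ 3 * y ^ 3 + (-6) * A ^ 2 * x ^ 4 * z ^ 2 + (-11) * A ^ 2 * x ^ 4 * y * z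 + (-4) * A ^ 2 * x ^ 4 * y ^ 2 + (-2) * A ^ 2 * x ^ 5 * z + (-1) * A ^ 2 * x ^ 5 * y) * h3

set_option maxHeartbeats 1000000 in
theorem stmt_19 :
    ∃ q : MvPolynomial (Fin 3) (GaloisField 3 3),
      q.IsHomogeneous 2 ∧
      f6 - f3 ^ 2 =
        q * MvPolynomial.map (frobenius (GaloisField 3 3) 3) q
          * MvPolynomial.map (frobenius (GaloisField 3 3) 3)
              (MvPolynomial.map (frobenius (GaloisField 3 3) 3) q) := by
  obtain ⟨a, ha⟩ := exists_root
  have h3 : (3 : MvPolynomial (Fin 3) (GaloisField 3 3)) = 0 := by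
    have hg : (3 : GaloisField 3 3) = 0 := by
      have : ((3 : ℕ) : GaloisField 3 3) = 0 := by rw [CharP.cast_eq_zero_iff _ 3]
      simpa using this
    rw [← map_ofNat (C : GaloisField 3 3 →+* MvPolynomial (Fin 3) (GaloisField 3 3)) 3, hg, map_zero]
  have hA : (C a : MvPolynomial (Fin 3) (GaloisField 3 3)) ^ 3 = C a + 1 := by
    rw [← map_pow, ha, map_add, map_one]
  refine ⟨(1) * (X 0 * X 0) + (C a + C a ^ 2) * (X 0 * X 1) + (1 + 2 * C a ^ 2) * (X 0 * X 2) + (1 + C a + C a ^ 2) * (X 1 * X 1) + (2 * C a ^ 2) * (X 1 * X 2) + (2) * (X 2 * X 2), ?_, ?_⟩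
  · have hca : (C a : MvPolynomial (Fin 3) (GaloisField 3 3)).IsHomogeneous 0 := isHomogeneous_C _ _
    have hca2 : ((C a : MvPolynomial (Fin 3) (GaloisField 3 3)) ^ 2).IsHomogeneous 0 := by simpa using hca.pow 2
    have h1 : (1 : MvPolynomial (Fin 3) (GaloisField 3 3)).IsHomogeneous 0 := isHomogeneous_one _ _
    have h2 : (2 : MvPolynomial (Fin 3) (GaloisField 3 3)).IsHomogeneous 0 := by
      have := isHomogeneous_C (Fin 3) (2 : GaloisField 3 3)
      rwa [map_ofNat] at this
    have hXX : ∀ i j : Fin 3, ((X i * X j : MvPolynomial (Fin 3) (GaloisField 3 3))).IsHomogeneous 2 := fun i j => by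
      simpa using (isHomogeneous_X _ i).mul (isHomogeneous_X _ j)
    have hterm : ∀ (c : MvPolynomial (Fin 3) (GaloisField 3 3)), c.IsHomogeneous 0 → ∀ i j : Fin 3,
        (c * (X i * X j)).IsHomogeneous 2 := fun c hc i j => by
      simpa using hc.mul (hXX i j)
    have c1 : ((1 : MvPolynomial (Fin 3) (GaloisField 3 3))).IsHomogeneous 0 := h1
    have c2 : ((C a + C a ^ 2 : MvPolynomial (Fin 3) (GaloisField 3 3))).IsHomogeneous 0 := hca.add hca2
    have c3 : ((1 + 2 * C a ^ 2 : MvPolynomial (Fin 3) (GaloisField 3 3))).IsHomogeneous 0 := h1.add (by simpa using h2.mul hca2)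
    have c4 : ((1 + C a + C a ^ 2 : MvPolynomial (Fin 3) (GaloisField 3 3))).IsHomogeneous 0 := (h1.add hca).add hca2
    have c5 : ((2 * C a ^ 2 : MvPolynomial (Fin 3) (GaloisField 3 3))).IsHomogeneous 0 := by simpa using h2.mul hca2
    have c6 : ((2 : MvPolynomial (Fin 3) (GaloisField 3 3))).IsHomogeneous 0 := h2
    exact (((((hterm _ c1 0 0).add (hterm _ c2 0 1)).add (hterm _ c3 0 2)).add
      (hterm _ c4 1 1)).add (hterm _ c5 1 2)).add (hterm _ c6 2 2)
  · have hq1 : MvPolynomial.map (frobenius (GaloisField 3 3) 3)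
        ((1) * (X 0 * X 0) + (C a + C a ^ 2) * (X 0 * X 1) + (1 + 2 * C a ^ 2) * (X 0 * X 2) + (1 + C a + C a ^ 2) * (X 1 * X 1) + (2 * C a ^ 2) * (X 1 * X 2) + (2) * (X 2 * X 2) : MvPolynomial (Fin 3) (GaloisField 3 3)) = ((1) * (X 0 * X 0) + (2 + C a ^ 2) * (X 0 * X 1) + (C a + 2 * C a ^ 2) * (X 0 * X 2) + (C a ^ 2) * (X 1 * X 1) + (2 + C a + 2 * C a ^ 2) * (X 1 * X 2) + (2) * (X 2 * X 2) : MvPolynomial (Fin 3) (GaloisField 3 3)) := by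
      simp only [map_add, map_mul, map_pow, map_ofNat, map_one, map_zero,
        MvPolynomial.map_C, MvPolynomial.map_X, frobenius_def, ha]
      linear_combination (((1) * X 1 ^ 2 + (1) * X 0 * X 2 + (1) * C a * X 1 * X 2 + (1) * C a * X 1 ^ 2 + (1) * C a * X 0 * X 2 + (1) * C a * X 0 * X 1 : MvPolynomial (Fin 3) (GaloisField 3 3))) * h3
    have hq2 : MvPolynomial.map (frobenius (GaloisField 3 3) 3)
        ((1) * (X 0 * X 0) + (2 + C a ^ 2) * (X 0 * X 1) + (C a + 2 * C a ^ 2) * (X 0 * X 2) + (C a ^ 2) * (X 1 * X 1) + (2 + C a + 2 * C a ^ 2) * (X 1 * X 2) + (2) * (X 2 * X 2) : MvPolynomial (Fin 3) (GaloisField 3 3)) = ((1) * (X 0 * X 0) + (2 * C a + C a ^ 2) * (X 0 * X 1) + (2 * C a + 2 * C a ^ 2) * (X 0 * X 2) + (1 + 2 * C a + C a ^ 2) * (X 1 * X 1) + (2 + 2 * C a + 2 * C a ^ 2) * (X 1 * X 2) + (2) * (X 2 * X 2) : MvPolynomial (Fin 3) (GaloisField 3 3)) := by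
      simp only [map_add, map_mul, map_pow, map_ofNat, map_one, map_zero,
        MvPolynomial.map_C, MvPolynomial.map_X, frobenius_def, ha]
      linear_combination (((1) * X 1 * X 2 + (1) * X 0 * X 2 + (1) * X 0 * X 1 + (1) * C a * X 1 * X 2 + (1) * C a * X 0 * X 2 : MvPolynomial (Fin 3) (GaloisField 3 3))) * h3
    rw [hq1, hq2]
    unfold f3 f6
    exact main_id (C a) (X 0) (X 1) (X 2) h3 hA
end
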